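/- Let S be a complete separable metric space equipped with its Borel σ-algebra, let P be a Borel probability measure on S, let ε ≥ 0, and let f : S → ℝ be bounded and continuous. Then ∫ sup{ f(u) : u ∈ closedBall(v, ε) } dP(v) = sup{ ∫ f dQ : Q a Borel probability measure on S for which there exists a coupling γ of Q and P with γ({(u, v) : dist(u, v) ≤ ε}) = 1 }. -/

import Mathlib

open MeasureTheory Metric Set Filter Topology
open scoped ENNReal NNReal

section Aux

variable {S : Type*} [MetricSpace S] [CompleteSpace S]
    [TopologicalSpace.SeparableSpace S] [MeasurableSpace S] [BorelSpace S]

/-- Step lemma: cut a set by finitely many small closed balls, losing little measure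
of the second projection. -/
lemma proj_step (P : Measure S) [IsFiniteMeasure P]
    {X : Type*} [MetricSpace X] [TopologicalSpace.SeparableSpace X] [Nonempty X]
    (π : X → S) (A : Set X) (r : ℝ) (hr : 0 < r) (ζ : ℝ≥0∞) (hζ : 0 < ζ) :
    ∃ t : Finset ℕ,
      P (π '' A) ≤ P (π '' (A ∩ ⋃ k ∈ t, closedBall (TopologicalSpace.denseSeq X k) r)) + ζ := by
  classical
  set d := TopologicalSpace.denseSeq X
  have hd : DenseRange d := TopologicalSpace.denseRange_denseSeq X
  have hcover : A = ⋃ m : ℕ, (A ∩ ⋃ k ∈ Finset.range m, closedBall (d k) r) := by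
    apply Subset.antisymm
    · intro x hx
      obtain ⟨k, hk⟩ := hd.exists_dist_lt x hr
      refine mem_iUnion.2 ⟨k + 1, hx, mem_biUnion (Finset.mem_range.2 (Nat.lt_succ_self k)) ?_⟩
      exact (dist_comm x (d k) ▸ hk.le : dist x (d k) ≤ r)
    · exact iUnion_subset fun m => inter_subset_left
  have hmono : Monotone (fun m : ℕ => π '' (A ∩ ⋃ k ∈ Finset.range m, closedBall (d k) r)) := by
    intro m m' hmm'
    apply image_mono
    exact inter_subset_inter_right _ (biUnion_subset_biUnion_left (Finset.range_subset_range.2 hmm'))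
  have hU : P (π '' A) = ⨆ m, P (π '' (A ∩ ⋃ k ∈ Finset.range m, closedBall (d k) r)) := by
    conv_lhs => rw [hcover]
    rw [image_iUnion]
    exact hmono.measure_iUnion
  rcases eq_or_ne (P (π '' A)) 0 with h0 | h0
  · exact ⟨Finset.range 0, by simp [h0]⟩
  have hlt : P (π '' A) - ζ < P (π '' A) :=
    ENNReal.sub_lt_self (measure_ne_top _ _) h0 hζ.ne'
  obtain ⟨m, hm⟩ := lt_iSup_iff.1 (lt_of_lt_of_le hlt (le_of_eq hU))
  refine ⟨Finset.range m, ?_⟩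
  calc P (π '' A) ≤ (P (π '' A) - ζ) + ζ := le_tsub_add
    _ ≤ P (π '' (A ∩ ⋃ k ∈ Finset.range m, closedBall (d k) r)) + ζ := by
        exact add_le_add_left hm.le _

set_option linter.unusedSectionVars false

/-- Choquet-style capacitability: the second projection of a closed set in `S × S`
contains compact projections of compact subsets of nearly full outer measure. -/
lemma compact_core (P : Measure S) [IsFiniteMeasure P]
    (C : Set (S × S)) (hC : IsClosed C) (η : ℝ≥0∞) (hη : 0 < η) :
    ∃ K : Set (S × S), IsCompact K ∧ K ⊆ C ∧
      P (Prod.snd '' C) ≤ P (Prod.snd '' K) + η := by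
  classical
  haveI : SecondCountableTopology S := UniformSpace.secondCountable_of_separable S
  rcases isEmpty_or_nonempty S with hS | hS
  · refine ⟨∅, isCompact_empty, empty_subset _, ?_⟩
    have : C = ∅ := eq_empty_of_isEmpty C
    simp [this]
  haveI : Nonempty (S × S) := inferInstance
  set d := TopologicalSpace.denseSeq (S × S) with hd_def
  -- the recursive construction
  have step : ∀ (A : Set (S × S)) (n : ℕ), ∃ B : Set (S × S),
      (∃ t : Finset ℕ, B = A ∩ ⋃ k ∈ t, closedBall (d k) ((1:ℝ)/2^(n+1))) ∧
      P (Prod.snd '' A) ≤ P (Prod.snd '' B) + η / 2^(n+1) := by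
    intro A n
    obtain ⟨t, ht⟩ := proj_step P (Prod.snd : S × S → S) A ((1:ℝ)/2^(n+1))
      (by positivity) (η / 2^(n+1)) (by
        apply ENNReal.div_pos hη.ne'
        exact ENNReal.pow_ne_top ENNReal.ofNat_ne_top)
    exact ⟨_, ⟨t, rfl⟩, ht⟩
  choose stepB hstepB1 hstepB2 using step
  set Cn : ℕ → Set (S × S) := fun n => Nat.rec C (fun n A => stepB A n) n with hCn_def
  have hCn0 : Cn 0 = C := rfl
  have hCnsucc : ∀ n, Cn (n + 1) = stepB (Cn n) n := fun n => rfl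
  have hCn_subset : ∀ n, Cn (n + 1) ⊆ Cn n := by
    intro n
    rw [hCnsucc n]
    obtain ⟨t, ht⟩ := hstepB1 (Cn n) n
    rw [ht]; exact inter_subset_left
  have hCn_anti : Antitone Cn := antitone_nat_of_succ_le hCn_subset
  have hCn_closed : ∀ n, IsClosed (Cn n) := by
    intro n
    induction n with
    | zero => exact hC
    | succ n ih =>
      rw [hCnsucc n]
      obtain ⟨t, ht⟩ := hstepB1 (Cn n) n
      rw [ht]
      exact ih.inter (t.finite_toSet.isClosed_biUnion fun k _ => isClosed_closedBall)
  have hCn_meas : ∀ n, P (Prod.snd '' C) ≤ P (Prod.snd '' (Cn n)) +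
      ∑ k ∈ Finset.range n, η / 2^(k+1) := by
    intro n
    induction n with
    | zero => simp [hCn0]
    | succ n ih =>
      calc P (Prod.snd '' C) ≤ P (Prod.snd '' (Cn n)) + ∑ k ∈ Finset.range n, η / 2^(k+1) := ih
        _ ≤ (P (Prod.snd '' (Cn (n+1))) + η / 2^(n+1)) + ∑ k ∈ Finset.range n, η / 2^(k+1) := by
            gcongr
            rw [hCnsucc n]; exact hstepB2 (Cn n) n
        _ = P (Prod.snd '' (Cn (n+1))) + ∑ k ∈ Finset.range (n+1), η / 2^(k+1) := by
            rw [Finset.sum_range_succ]; ring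
  have hsum : ∀ n, (∑ k ∈ Finset.range n, η / 2^(k+1) : ℝ≥0∞) ≤ η := by
    intro n
    calc (∑ k ∈ Finset.range n, η / 2^(k+1) : ℝ≥0∞) ≤ ∑' k : ℕ, η / 2^(k+1) :=
          ENNReal.sum_le_tsum _
      _ = η * ∑' k : ℕ, (2⁻¹ : ℝ≥0∞)^(k+1) := by
          rw [← ENNReal.tsum_mul_left]
          congr 1; ext k; rw [div_eq_mul_inv, ENNReal.inv_pow]
      _ = η * (2⁻¹ * ∑' k : ℕ, (2⁻¹ : ℝ≥0∞)^k) := by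
          congr 1
          rw [← ENNReal.tsum_mul_left]
          congr 1; ext k; rw [pow_succ, mul_comm]
      _ = η := by
          rw [ENNReal.tsum_geometric, ENNReal.one_sub_inv_two, inv_inv,
            ENNReal.inv_mul_cancel two_ne_zero ENNReal.ofNat_ne_top, mul_one]
  -- the compact kernel
  set K : Set (S × S) := ⋂ n, Cn n with hK_def
  have hK_closed : IsClosed K := isClosed_iInter hCn_closed
  have hK_sub : K ⊆ C := hCn0 ▸ iInter_subset Cn 0
  -- choose the finsets
  choose tn htn using fun n => hstepB1 (Cn n) n
  have hCn_ball : ∀ n, Cn (n+1) ⊆ ⋃ k ∈ tn n, closedBall (d k) ((1:ℝ)/2^(n+1)) := by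
    intro n
    rw [hCnsucc n, htn n]
    exact inter_subset_right
  have hsmall : ∀ δ : ℝ, 0 < δ → ∃ n : ℕ, (1:ℝ)/2^(n+1) < δ := by
    intro δ hδ
    obtain ⟨n, hn⟩ := exists_pow_lt_of_lt_one hδ (by norm_num : (1:ℝ)/2 < 1)
    refine ⟨n, lt_of_le_of_lt ?_ hn⟩
    rw [div_pow, one_pow]
    gcongr
    · norm_num
    · exact Nat.le_succ n
  have hK_tb : TotallyBounded K := by
    rw [Metric.totallyBounded_iff]
    intro δ hδ
    obtain ⟨n, hn⟩ := hsmall δ hδ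
    refine ⟨d '' (tn n), ((tn n).finite_toSet.image d), ?_⟩
    intro x hx
    have hx' : x ∈ Cn (n+1) := mem_iInter.1 hx (n+1)
    obtain ⟨k, hk, hxk⟩ := mem_iUnion₂.1 (hCn_ball n hx')
    exact mem_biUnion (mem_image_of_mem d hk) (lt_of_le_of_lt hxk hn)
  have hK_compact : IsCompact K := hK_tb.isCompact_of_isClosed hK_closed
  set L : Set S := Prod.snd '' K with hL_def
  have hL_compact : IsCompact L := hK_compact.image continuous_snd
  -- the covering claim
  have claim : ∀ r : ℝ, 0 < r → ∃ n, Prod.snd '' (Cn n) ⊆ thickening r L := by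
    intro r hr
    by_contra hcon
    push_neg at hcon
    have hex : ∀ n, ∃ q : S × S, q ∈ Cn n ∧ Prod.snd q ∉ thickening r L := by
      intro n
      obtain ⟨v, hv1, hv2⟩ := not_subset.1 (hcon n)
      obtain ⟨q, hq, rfl⟩ := hv1
      exact ⟨q, hq, hv2⟩
    choose p hp1 hp2 using hex
    have hp_tb : TotallyBounded (range p) := by
      rw [Metric.totallyBounded_iff]
      intro δ hδ
      obtain ⟨n, hn⟩ := hsmall δ hδ
      refine ⟨d '' (tn n) ∪ p '' {m | m ≤ n}, ?_, ?_⟩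
      · exact (((tn n).finite_toSet.image d)).union ((finite_Iic n).image p)
      · rintro x ⟨m, rfl⟩
        rcases le_or_gt m n with hmn | hmn
        · exact mem_biUnion (mem_union_right _ (mem_image_of_mem p hmn))
            (mem_ball_self hδ)
        · have : p m ∈ Cn (n+1) := hCn_anti hmn (hp1 m)
          obtain ⟨k, hk, hxk⟩ := mem_iUnion₂.1 (hCn_ball n this)
          exact mem_biUnion (mem_union_left _ (mem_image_of_mem d hk))
            (lt_of_le_of_lt hxk hn)
    have hcl : IsCompact (closure (range p)) :=
      hp_tb.closure.isCompact_of_isClosed isClosed_closure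
    obtain ⟨a, -, φ, hφ, hlim⟩ := hcl.tendsto_subseq (fun n => subset_closure (mem_range_self n))
    have haK : a ∈ K := by
      refine mem_iInter.2 fun m => ?_
      refine (hCn_closed m).mem_of_tendsto hlim (eventually_atTop.2 ⟨m, fun n hn => ?_⟩)
      exact hCn_anti (le_trans hn (hφ.le_apply)) (hp1 (φ n))
    have h1 : Prod.snd a ∈ thickening r L :=
      self_subset_thickening hr L (mem_image_of_mem Prod.snd haK)
    have h2 : Prod.snd a ∈ (thickening r L)ᶜ := by
      refine (isOpen_thickening.isClosed_compl).mem_of_tendsto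
        ((continuous_snd.tendsto a).comp hlim) (Eventually.of_forall fun n => hp2 (φ n))
    exact h2 h1
  -- conclude via cthickening limit
  have hbound : ∀ r : ℝ, 0 < r → P (Prod.snd '' C) ≤ P (cthickening r L) + η := by
    intro r hr
    obtain ⟨n, hn⟩ := claim r hr
    calc P (Prod.snd '' C) ≤ P (Prod.snd '' (Cn n)) + ∑ k ∈ Finset.range n, η / 2^(k+1) :=
          hCn_meas n
      _ ≤ P (cthickening r L) + η :=
          add_le_add (measure_mono (hn.trans (thickening_subset_cthickening r L))) (hsum n)
  have htend : Tendsto (fun m : ℕ => P (cthickening (1/((m:ℝ)+1)) L) + η) atTop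
      (𝓝 (P L + η)) := by
    have h0 : Tendsto (fun m : ℕ => (1:ℝ)/((m:ℝ)+1)) atTop (𝓝 0) :=
      tendsto_one_div_add_atTop_nhds_zero_nat
    exact ((tendsto_measure_cthickening_of_isClosed
      ⟨1, one_pos, measure_ne_top P _⟩ hL_compact.isClosed).comp h0).add tendsto_const_nhds
  refine ⟨K, hK_compact, hK_sub, ?_⟩
  exact ge_of_tendsto' htend fun m => hbound _ (by positivity)

/-- σ-compact inner core of the projection of a closed set, with null difference. -/
lemma sigma_core (P : Measure S) [IsFiniteMeasure P]
    (C : Set (S × S)) (hC : IsClosed C) :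
    ∃ K : ℕ → Set (S × S), (∀ n, IsCompact (K n)) ∧ (∀ n, K n ⊆ C) ∧
      P (Prod.snd '' C \ ⋃ n, Prod.snd '' (K n)) = 0 := by
  have h : ∀ n : ℕ, ∃ K : Set (S × S), IsCompact K ∧ K ⊆ C ∧
      P (Prod.snd '' C) ≤ P (Prod.snd '' K) + (↑(n+1))⁻¹ := by
    intro n
    exact compact_core P C hC (↑(n+1))⁻¹ (by
      simp only [ENNReal.inv_pos]
      exact ENNReal.natCast_ne_top (n+1))
  choose K hK1 hK2 hK3 using h
  refine ⟨K, hK1, hK2, ?_⟩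
  set U : Set S := ⋃ n, Prod.snd '' (K n) with hU_def
  have hU_meas : MeasurableSet U :=
    MeasurableSet.iUnion fun n => ((hK1 n).image continuous_snd).isClosed.measurableSet
  have hUsub : U ⊆ Prod.snd '' C := iUnion_subset fun n => image_mono (hK2 n)
  set H : Set S := toMeasurable P (Prod.snd '' C) with hH_def
  have hsubH : Prod.snd '' C ⊆ H := subset_toMeasurable P _
  have hdiff : Prod.snd '' C \ U ⊆ H \ U := diff_subset_diff_left hsubH
  refine measure_mono_null hdiff ?_
  have hHU : P (H \ U) = P H - P U :=
    measure_diff (hUsub.trans hsubH) hU_meas.nullMeasurableSet (measure_ne_top P U)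
  have hbound : ∀ n : ℕ, P (H \ U) ≤ ((n:ℝ≥0∞)+1)⁻¹ := by
    intro n
    rw [hHU, tsub_le_iff_right]
    calc P H = P (Prod.snd '' C) := measure_toMeasurable _
      _ ≤ P (Prod.snd '' (K n)) + ((n:ℝ≥0∞)+1)⁻¹ := by exact_mod_cast hK3 n
      _ ≤ P U + ((n:ℝ≥0∞)+1)⁻¹ :=
          add_le_add (measure_mono (subset_iUnion (fun n => Prod.snd '' (K n)) n)) le_rfl
      _ = ((n:ℝ≥0∞)+1)⁻¹ + P U := add_comm _ _
  by_contra hne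
  obtain ⟨n, hn⟩ := ENNReal.exists_inv_nat_lt hne
  have h1 : ((n:ℝ≥0∞)+1)⁻¹ ≤ (n:ℝ≥0∞)⁻¹ := by
    gcongr
    exact le_self_add
  have := (hbound n).trans (by exact_mod_cast h1)
  exact absurd hn (not_lt.2 this)


open TopologicalSpace in
/-- Auxiliary: nested constraint sets for the selection construction. -/
def selF {S : Type*} [MetricSpace S] (e : ℕ → S) : List ℕ → Set S
  | [] => Set.univ
  | j :: w => selF e w ∩ closedBall (e j) ((1/2 : ℝ) ^ w.length)

/-- Auxiliary: hit sets. -/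
def selV {S : Type*} [MetricSpace S] (K : Set (S × S)) (e : ℕ → S) (w : List ℕ) : Set S :=
  Prod.snd '' (K ∩ (selF e w ×ˢ (Set.univ : Set S)))

/-- Auxiliary: cells of the selection scheme. -/
def selCell {S : Type*} [MetricSpace S] (K : Set (S × S)) (e : ℕ → S) : List ℕ → Set S
  | [] => Set.univ
  | j :: w => selCell K e w ∩ selV K e (j :: w) ∩ ⋂ j' ∈ Finset.range j, (selV K e (j' :: w))ᶜ

set_option maxHeartbeats 1000000 in
/-- Measurable selection from a compact subset of `S × S` along the second projection. -/
lemma compact_selection (K : Set (S × S)) (hK : IsCompact K) :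
    ∃ T : S → S, Measurable T ∧ (∀ v ∈ Prod.snd '' K, (T v, v) ∈ K) ∧
      ∀ v ∉ Prod.snd '' K, T v = v := by
  classical
  rcases eq_empty_or_nonempty K with rfl | hKne
  · exact ⟨id, measurable_id, by simp, fun v _ => rfl⟩
  haveI : Nonempty S := ⟨hKne.some.2⟩
  set e : ℕ → S := TopologicalSpace.denseSeq S with he_def
  have he : DenseRange e := TopologicalSpace.denseRange_denseSeq S
  have hL_closed : IsClosed (Prod.snd '' K) := (hK.image continuous_snd).isClosed
  have hr_pos : ∀ n : ℕ, (0:ℝ) < (1/2)^n := fun n => by positivity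
  have hF_closed : ∀ w, IsClosed (selF e w) := by
    intro w
    induction w with
    | nil => exact isClosed_univ
    | cons j w ih => exact ih.inter isClosed_closedBall
  have hV_mem : ∀ w v, v ∈ selV K e w ↔ ∃ u, (u, v) ∈ K ∧ u ∈ selF e w := by
    intro w v
    constructor
    · rintro ⟨⟨u, v'⟩, ⟨hK', hF', -⟩, rfl⟩
      exact ⟨u, hK', hF'⟩
    · rintro ⟨u, hK', hF'⟩
      exact ⟨(u, v), ⟨hK', hF', mem_univ _⟩, rfl⟩
  have hV_meas : ∀ w, MeasurableSet (selV K e w) := fun w =>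
    (((hK.inter_right ((hF_closed w).prod isClosed_univ)).image
      continuous_snd).isClosed).measurableSet
  have hV_subL : ∀ w, selV K e w ⊆ Prod.snd '' K := fun w => image_mono inter_subset_left
  have hCell_meas : ∀ w, MeasurableSet (selCell K e w) := by
    intro w
    induction w with
    | nil => exact MeasurableSet.univ
    | cons j w ih =>
      rw [selCell]
      exact (ih.inter (hV_meas (j :: w))).inter
        (Set.Finite.measurableSet_biInter (Finset.range j).finite_toSet
          (fun j' _ => (hV_meas (j' :: w)).compl))
  have hCell_subV : ∀ j w, selCell K e (j :: w) ⊆ selV K e (j :: w) := by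
    intro j w; rw [selCell]
    exact inter_subset_left.trans inter_subset_right
  have hCell_sub : ∀ j w, selCell K e (j :: w) ⊆ selCell K e w := by
    intro j w; rw [selCell]
    exact inter_subset_left.trans inter_subset_left
  -- uniqueness of the cell word at each level
  have hunique : ∀ n : ℕ, ∀ w w' : List ℕ, w.length = n → w'.length = n →
      ∀ v, v ∈ selCell K e w → v ∈ selCell K e w' → w = w' := by
    intro n
    induction n with
    | zero =>
      intro w w' hw hw' v _ _
      rw [List.length_eq_zero_iff] at hw hw'; rw [hw, hw']
    | succ n ih =>
      intro w0 w0' hw hw' v hv hv'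
      obtain ⟨j, w, rfl, hu⟩ : ∃ j w, w0 = j :: w ∧ w.length = n := by
        cases w0 with
        | nil => simp at hw
        | cons a b => exact ⟨a, b, rfl, by simpa using hw⟩
      obtain ⟨j', w', rfl, hu'⟩ : ∃ j' w', w0' = j' :: w' ∧ w'.length = n := by
        cases w0' with
        | nil => simp at hw'
        | cons a b => exact ⟨a, b, rfl, by simpa using hw'⟩
      have hww' : w = w' := ih w w' hu hu' v (hCell_sub _ _ hv) (hCell_sub _ _ hv')
      subst hww'
      rcases lt_trichotomy j j' with h | h | h
      · refine absurd ((hCell_subV j w) hv) ?_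
        rw [selCell] at hv'
        exact mem_iInter₂.1 hv'.2 j (Finset.mem_range.2 h)
      · rw [h]
      · refine absurd ((hCell_subV j' w) hv') ?_
        rw [selCell] at hv
        exact mem_iInter₂.1 hv.2 j' (Finset.mem_range.2 h)
  -- existence of cell words on L
  have hex : ∀ v ∈ Prod.snd '' K, ∀ n : ℕ, ∃ w : List ℕ,
      w.length = n ∧ v ∈ selCell K e w ∧ v ∈ selV K e w := by
    intro v hv n
    induction n with
    | zero =>
      refine ⟨[], rfl, mem_univ _, ?_⟩
      obtain ⟨p, hp, hpv⟩ := hv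
      refine (hV_mem [] v).2 ⟨p.1, ?_, mem_univ _⟩
      rwa [← hpv, Prod.mk.eta]
    | succ n ih =>
      obtain ⟨w, hwlen, hwc, hwv⟩ := ih
      obtain ⟨u, huK, huF⟩ := (hV_mem w v).1 hwv
      have hJ : ∃ j, v ∈ selV K e (j :: w) := by
        obtain ⟨j, hj⟩ := he.exists_dist_lt u (hr_pos w.length)
        refine ⟨j, (hV_mem _ v).2 ⟨u, huK, ?_⟩⟩
        rw [selF]
        exact ⟨huF, mem_closedBall.2 (by rw [dist_comm] at hj ⊢; exact hj.le)⟩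
      refine ⟨Nat.find hJ :: w, by simp [hwlen], ?_, Nat.find_spec hJ⟩
      rw [selCell]
      refine ⟨⟨hwc, Nat.find_spec hJ⟩, ?_⟩
      exact mem_iInter₂.2 fun j' hj' => Nat.find_min hJ (Finset.mem_range.1 hj')
  -- the unique cell word at each level, as a function
  set cw : ℕ → S → List ℕ := fun n v =>
    if h : ∃ w : List ℕ, w.length = n + 1 ∧ v ∈ selCell K e w then h.choose else [] with hcw_def
  have hcw_spec : ∀ n v (h : ∃ w : List ℕ, w.length = n + 1 ∧ v ∈ selCell K e w),
      (cw n v).length = n + 1 ∧ v ∈ selCell K e (cw n v) := by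
    intro n v h
    rw [hcw_def]; simp only [dif_pos h]
    exact h.choose_spec
  have hcw_none : ∀ n v, (¬ ∃ w : List ℕ, w.length = n + 1 ∧ v ∈ selCell K e w) →
      cw n v = [] := by
    intro n v h; rw [hcw_def]; simp only [dif_neg h]
  have hcw_eq : ∀ n v w, w.length = n + 1 → v ∈ selCell K e w → cw n v = w := by
    intro n v w hw hv
    have h : ∃ w : List ℕ, w.length = n + 1 ∧ v ∈ selCell K e w := ⟨w, hw, hv⟩
    obtain ⟨h1, h2⟩ := hcw_spec n v h
    exact hunique (n+1) _ _ h1 hw v h2 hv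
  have hfib : ∀ n w, MeasurableSet {v | cw n v = w} := by
    intro n w
    by_cases hw : w.length = n + 1
    · have : {v | cw n v = w} = selCell K e w := by
        ext v
        simp only [mem_setOf_eq]
        constructor
        · intro hv
          by_cases h : ∃ w : List ℕ, w.length = n + 1 ∧ v ∈ selCell K e w
          · have := (hcw_spec n v h).2; rwa [hv] at this
          · rw [hcw_none n v h] at hv
            rw [← hv] at hw; simp at hw
        · intro hv; exact hcw_eq n v w hw hv
      rw [this]; exact hCell_meas w
    by_cases hw0 : w = []
    · subst hw0
      have : {v | cw n v = []} =
          (⋃ (w : List ℕ) (_ : w.length = n + 1), selCell K e w)ᶜ := by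
        ext v
        simp only [mem_setOf_eq, mem_compl_iff, mem_iUnion, not_exists]
        constructor
        · intro hv w' hw' hvc
          have := hcw_eq n v w' hw' hvc
          rw [hv] at this; rw [← this] at hw'; simp at hw'
        · intro h
          exact hcw_none n v (fun ⟨w', hw1, hw2⟩ => h w' hw1 hw2)
      rw [this]
      exact (MeasurableSet.iUnion fun w => MeasurableSet.iUnion fun _ => hCell_meas w).compl
    · have : {v | cw n v = w} = ∅ := by
        ext v
        simp only [mem_setOf_eq, mem_empty_iff_false, iff_false]
        intro hv
        by_cases h : ∃ w : List ℕ, w.length = n + 1 ∧ v ∈ selCell K e w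
        · exact hw (hv ▸ (hcw_spec n v h).1)
        · exact hw0 (hv ▸ hcw_none n v h)
      rw [this]; exact MeasurableSet.empty
  -- the approximating functions
  set G : List ℕ → S → S := fun w v => List.casesOn w v (fun j _ => e j) with hG_def
  have hG_nil : ∀ v, G [] v = v := fun v => rfl
  have hG_cons : ∀ j w v, G (j :: w) v = e j := fun j w v => rfl
  have hG_meas : ∀ w, Measurable (G w) := by
    intro w
    cases w with
    | nil => exact measurable_id
    | cons j w => exact measurable_const
  set Tn : ℕ → S → S := fun n v => G (cw n v) v with hTn_def
  have hTn_meas : ∀ n, Measurable (Tn n) := by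
    intro n
    intro t ht
    have : Tn n ⁻¹' t = ⋃ w : List ℕ, ({v | cw n v = w} ∩ (G w) ⁻¹' t) := by
      ext v
      simp only [mem_preimage, mem_iUnion, mem_inter_iff, mem_setOf_eq]
      constructor
      · intro hv; exact ⟨cw n v, rfl, hv⟩
      · rintro ⟨w, hw, hv⟩; show G (cw n v) v ∈ t; rw [hw]; exact hv
    rw [this]
    exact MeasurableSet.iUnion fun w => (hfib n w).inter (hG_meas w ht)
  -- membership in selV from cells, on L
  have hCellV : ∀ v ∈ Prod.snd '' K, ∀ w, v ∈ selCell K e w → v ∈ selV K e w := by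
    intro v hv w hvc
    cases w with
    | nil =>
      obtain ⟨p, hp, hpv⟩ := hv
      exact (hV_mem [] v).2 ⟨p.1, by rwa [← hpv, Prod.mk.eta], mem_univ _⟩
    | cons j w => exact hCell_subV j w hvc
  -- convergence of the scheme
  have hconv : ∀ v : S, ∃ x : S, Tendsto (fun n => Tn n v) atTop (𝓝 x) ∧
      (v ∈ Prod.snd '' K → (x, v) ∈ K) ∧ (v ∉ Prod.snd '' K → x = v) := by
    intro v
    by_cases hvL : v ∈ Prod.snd '' K
    · -- the interesting case
      have hword : ∀ n, (cw n v).length = n + 1 ∧ v ∈ selCell K e (cw n v) := by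
        intro n
        obtain ⟨w, hw1, hw2, -⟩ := hex v hvL (n+1)
        exact hcw_spec n v ⟨w, hw1, hw2⟩
      have hcons : ∀ n, ∃ j w', cw n v = j :: w' ∧ w'.length = n := by
        intro n
        rcases hw : cw n v with _ | ⟨j, w'⟩
        · exfalso; have := (hword n).1; rw [hw] at this; simp at this
        · have := (hword n).1; rw [hw] at this
          exact ⟨j, w', rfl, by simpa using this⟩
      have hnested : ∀ n, ∃ j, cw (n+1) v = j :: cw n v := by
        intro n
        obtain ⟨j, w', hw, hwl⟩ := hcons (n+1)
        refine ⟨j, ?_⟩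
        have hv' : v ∈ selCell K e (j :: w') := hw ▸ (hword (n+1)).2
        have : cw n v = w' := hcw_eq n v w' hwl (hCell_sub j w' hv')
        rw [hw, this]
      have hu : ∀ n, ∃ u, (u, v) ∈ K ∧ u ∈ selF e (cw n v) := fun n =>
        (hV_mem _ v).1 (hCellV v hvL _ (hword n).2)
      choose u huK huF using hu
      -- the ball bound
      have hball : ∀ n, ∀ x ∈ selF e (cw n v), dist x (Tn n v) ≤ (1/2)^n := by
        intro n x hx
        obtain ⟨j, w', hw, hwl⟩ := hcons n
        have hT : Tn n v = e j := by show G (cw n v) v = e j; rw [hw]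
        rw [hT]
        rw [hw, selF] at hx
        have := hx.2
        rw [mem_closedBall, hwl] at this
        exact this
      have hstep : ∀ n, u (n+1) ∈ selF e (cw n v) := by
        intro n
        obtain ⟨j, hj⟩ := hnested n
        have := huF (n+1)
        rw [hj, selF] at this
        exact this.1
      have hcauchy : CauchySeq u := by
        apply cauchySeq_of_le_geometric (1/2 : ℝ) 2 (by norm_num)
        intro n
        calc dist (u n) (u (n+1)) ≤ dist (u n) (Tn n v) + dist (u (n+1)) (Tn n v) :=
              dist_triangle_right _ _ _
          _ ≤ (1/2)^n + (1/2)^n := add_le_add (hball n _ (huF n)) (hball n _ (hstep n))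
          _ = 2 * (1/2)^n := by ring
      obtain ⟨x, hx⟩ := cauchySeq_tendsto_of_complete hcauchy
      refine ⟨x, ?_, fun _ => ?_, fun h => absurd hvL h⟩
      · -- Tn n v → x
        rw [tendsto_iff_dist_tendsto_zero]
        have hb : ∀ n, dist (Tn n v) x ≤ (1/2)^n + dist (u n) x := by
          intro n
          calc dist (Tn n v) x ≤ dist (Tn n v) (u n) + dist (u n) x := dist_triangle _ _ _
            _ ≤ (1/2)^n + dist (u n) x := by
                rw [dist_comm]
                exact add_le_add_left (hball n _ (huF n)) _
        have hlim : Tendsto (fun n => (1/2:ℝ)^n + dist (u n) x) atTop (𝓝 0) := by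
          have h1 : Tendsto (fun n => (1/2:ℝ)^n) atTop (𝓝 0) :=
            tendsto_pow_atTop_nhds_zero_of_lt_one (by norm_num) (by norm_num)
          have h2 : Tendsto (fun n => dist (u n) x) atTop (𝓝 0) :=
            tendsto_iff_dist_tendsto_zero.1 hx
          simpa using h1.add h2
        exact squeeze_zero (fun n => dist_nonneg) hb hlim
      · -- (x, v) ∈ K
        have : Tendsto (fun n => (u n, v)) atTop (𝓝 (x, v)) :=
          hx.prodMk_nhds tendsto_const_nhds
        exact hK.isClosed.mem_of_tendsto this (Eventually.of_forall fun n => huK n)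
    · -- v not in the projection
      have hTv : ∀ n, Tn n v = v := by
        intro n
        have hnone : ¬ ∃ w : List ℕ, w.length = n + 1 ∧ v ∈ selCell K e w := by
          rintro ⟨w, hw1, hw2⟩
          rcases w with _ | ⟨j, w'⟩
          · simp at hw1
          · exact hvL (hV_subL _ (hCell_subV j w' hw2))
        show G (cw n v) v = v; rw [hcw_none n v hnone]
      refine ⟨v, ?_, fun h => absurd h hvL, fun _ => rfl⟩
      simp only [hTv]
      exact tendsto_const_nhds
  choose T hT1 hT2 hT3 using hconv
  refine ⟨T, ?_, hT2, hT3⟩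
  exact measurable_of_tendsto_metrizable hTn_meas (tendsto_pi_nhds.2 hT1)

end Aux

set_option maxHeartbeats 1000000 in
/-- The equality in Lemma C.1 (Staib–Jegelka, Prop. 3.1): the expectation of the
ε-robust loss equals the worst-case expected loss over the `W∞`-ball around `P`. -/
theorem stmt2 {S : Type*} [MetricSpace S] [CompleteSpace S]
    [TopologicalSpace.SeparableSpace S] [MeasurableSpace S] [BorelSpace S]
    (P : Measure S) [IsProbabilityMeasure P]
    (ε : ℝ) (hε : 0 ≤ ε)
    (f : S → ℝ) (hf : Continuous f) (hfb : ∃ C, ∀ s, |f s| ≤ C) :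
    ∫ v, sSup (f '' Metric.closedBall v ε) ∂P
      = sSup {r : ℝ | ∃ Q : Measure S, IsProbabilityMeasure Q ∧
          (∃ γ : Measure (S × S), IsProbabilityMeasure γ ∧
            γ.map Prod.fst = Q ∧ γ.map Prod.snd = P ∧
            γ {p : S × S | dist p.1 p.2 ≤ ε} = 1) ∧
          r = ∫ u, f u ∂Q} := by
  classical
  obtain ⟨C0, hC0⟩ := hfb
  set C : ℝ := max C0 0 with hC_def
  have hfC : ∀ s, |f s| ≤ C := fun s => (hC0 s).trans (le_max_left _ _)
  have hCpos : 0 ≤ C := le_max_right _ _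
  set g : S → ℝ := fun v => sSup (f '' Metric.closedBall v ε) with hg_def
  set R : Set ℝ := {r : ℝ | ∃ Q : Measure S, IsProbabilityMeasure Q ∧
          (∃ γ : Measure (S × S), IsProbabilityMeasure γ ∧
            γ.map Prod.fst = Q ∧ γ.map Prod.snd = P ∧
            γ {p : S × S | dist p.1 p.2 ≤ ε} = 1) ∧
          r = ∫ u, f u ∂Q} with hR_def
  show ∫ v, g v ∂P = sSup R
  -- basic facts about `g`
  have hball_ne : ∀ v : S, (f '' Metric.closedBall v ε).Nonempty :=
    fun v => ⟨f v, v, mem_closedBall_self hε, rfl⟩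
  have hbdd : ∀ v : S, BddAbove (f '' Metric.closedBall v ε) := by
    intro v
    refine ⟨C, ?_⟩
    rintro x ⟨u, -, rfl⟩
    exact (abs_le.1 (hfC u)).2
  have hg_ge : ∀ v u : S, dist u v ≤ ε → f u ≤ g v := fun v u h =>
    le_csSup (hbdd v) (mem_image_of_mem f (mem_closedBall.2 h))
  have hg_ub : ∀ v, g v ≤ C := by
    intro v
    refine csSup_le (hball_ne v) ?_
    rintro x ⟨u, -, rfl⟩
    exact (abs_le.1 (hfC u)).2
  have hg_lb : ∀ v, -C ≤ g v := fun v =>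
    le_trans (abs_le.1 (hfC v)).1 (hg_ge v v (by simp [hε]))
  have hg_lt : ∀ (v : S) (t : ℝ), t < g v → ∃ u, dist u v ≤ ε ∧ t < f u := by
    intro v t ht
    obtain ⟨x, ⟨u, hu, rfl⟩, hx⟩ := exists_lt_of_lt_csSup (hball_ne v) ht
    exact ⟨u, mem_closedBall.1 hu, hx⟩
  -- closed constraint sets
  set Ct : ℝ → Set (S × S) := fun t => {p : S × S | dist p.1 p.2 ≤ ε ∧ t ≤ f p.1}
    with hCt_def
  have hdist_closed : IsClosed {p : S × S | dist p.1 p.2 ≤ ε} :=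
    isClosed_le (continuous_fst.dist continuous_snd) continuous_const
  have hCt_closed : ∀ t, IsClosed (Ct t) := by
    intro t
    have : Ct t = {p : S × S | dist p.1 p.2 ≤ ε} ∩ {p : S × S | t ≤ f p.1} := rfl
    rw [this]
    exact hdist_closed.inter (isClosed_le continuous_const (hf.comp continuous_fst))
  set At : ℝ → Set S := fun t => Prod.snd '' (Ct t) with hAt_def
  have hA_g : ∀ (t : ℝ) (v : S), v ∈ At t → t ≤ g v := by
    rintro t v ⟨⟨u, v'⟩, ⟨hd, hfu⟩, rfl⟩
    exact hfu.trans (hg_ge _ u hd)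
  have hg_A : ∀ (t : ℝ) (v : S), t < g v → v ∈ At t := by
    intro t v ht
    obtain ⟨u, hd, hfu⟩ := hg_lt v t ht
    exact ⟨(u, v), ⟨hd, hfu.le⟩, rfl⟩
  have hA_univ : ∀ t : ℝ, t ≤ -C → At t = univ := by
    intro t ht
    refine eq_univ_of_forall fun v => ⟨(v, v), ⟨by simp [hε], ?_⟩, rfl⟩
    exact ht.trans ((abs_le.1 (hfC v)).1)
  -- σ-compact cores for each rational level
  have hscore : ∀ q : ℚ, ∃ K : ℕ → Set (S × S), (∀ n, IsCompact (K n)) ∧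
      (∀ n, K n ⊆ Ct (q : ℝ)) ∧
      P (Prod.snd '' Ct (q : ℝ) \ ⋃ n, Prod.snd '' (K n)) = 0 :=
    fun q => sigma_core P (Ct q) (hCt_closed q)
  choose Kq hKq_cpt hKq_sub hKq_null using hscore
  set B : ℚ → Set S := fun q => ⋃ n, Prod.snd '' (Kq q n) with hB_def
  have hB_meas : ∀ q, MeasurableSet (B q) := fun q =>
    MeasurableSet.iUnion fun n =>
      (((hKq_cpt q n).image continuous_snd).isClosed).measurableSet
  have hB_sub : ∀ q, B q ⊆ At (q : ℝ) := fun q =>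
    iUnion_subset fun n => image_mono (hKq_sub q n)
  set Nset : Set S := ⋃ q : ℚ, (At (q : ℝ) \ B q) with hNset_def
  have hNnull : P Nset = 0 := measure_iUnion_null fun q => hKq_null q
  -- selections
  have hsel : ∀ (q : ℚ) (n : ℕ), ∃ T : S → S, Measurable T ∧
      (∀ v ∈ Prod.snd '' (Kq q n), (T v, v) ∈ Kq q n) ∧
      ∀ v ∉ Prod.snd '' (Kq q n), T v = v :=
    fun q n => compact_selection (Kq q n) (hKq_cpt q n)
  choose Tqn hTqn_meas hTqn_mem hTqn_id using hsel
  -- the measurable a.e. version of g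
  set φ : S → ℝ := fun v => sSup ({x : ℝ | ∃ q : ℚ, x = (q : ℝ) ∧ v ∈ B q} ∪ {-C})
    with hφ_def
  have hφ_ne : ∀ v, ({x : ℝ | ∃ q : ℚ, x = (q : ℝ) ∧ v ∈ B q} ∪ {-C} : Set ℝ).Nonempty :=
    fun v => ⟨-C, Or.inr rfl⟩
  have hφ_bddA : ∀ v, BddAbove ({x : ℝ | ∃ q : ℚ, x = (q : ℝ) ∧ v ∈ B q} ∪ {-C} : Set ℝ) := by
    intro v
    refine ⟨C, ?_⟩
    rintro x (⟨q, rfl, hq⟩ | rfl)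
    · exact le_trans (hA_g _ v (hB_sub q hq)) (hg_ub v)
    · linarith
  have hφ_le_g : ∀ v, φ v ≤ g v := by
    intro v
    refine csSup_le (hφ_ne v) ?_
    rintro x (⟨q, rfl, hq⟩ | rfl)
    · exact hA_g _ v (hB_sub q hq)
    · exact hg_lb v
  have hg_le_φ : ∀ v, v ∉ Nset → g v ≤ φ v := by
    intro v hv
    by_contra hcon
    push_neg at hcon
    obtain ⟨q, hq1, hq2⟩ := exists_rat_btwn hcon
    have hvA : v ∈ At (q : ℝ) := hg_A _ v hq2
    have hvB : v ∈ B q := by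
      by_contra hvB
      exact hv (mem_iUnion.2 ⟨q, hvA, hvB⟩)
    have : (q : ℝ) ≤ φ v := le_csSup (hφ_bddA v) (Or.inl ⟨q, rfl, hvB⟩)
    linarith
  have hgφ_ae : g =ᵐ[P] φ := by
    have hmem : Nsetᶜ ∈ ae P := by rw [mem_ae_iff, compl_compl]; exact hNnull
    refine Filter.eventuallyEq_of_mem hmem fun v hv => ?_
    exact le_antisymm (hg_le_φ v hv) (hφ_le_g v)
  have hφ_meas : Measurable φ := by
    apply measurable_of_Ioi
    intro a
    have hset : φ ⁻¹' Ioi a =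
        (⋃ (q : ℚ) (_ : a < (q : ℝ)), B q) ∪ ⋃ (_ : a < -C), univ := by
      ext v
      simp only [mem_preimage, mem_Ioi, mem_union, mem_iUnion, exists_prop]
      constructor
      · intro hv
        obtain ⟨x, hx, hax⟩ := exists_lt_of_lt_csSup (hφ_ne v) hv
        rcases hx with ⟨q, rfl, hq⟩ | rfl
        · exact Or.inl ⟨q, hax, hq⟩
        · exact Or.inr ⟨hax, mem_univ v⟩
      · rintro (⟨q, haq, hq⟩ | ⟨haC, -⟩)
        · exact lt_of_lt_of_le haq (le_csSup (hφ_bddA v) (Or.inl ⟨q, rfl, hq⟩))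
        · exact lt_of_lt_of_le haC (le_csSup (hφ_bddA v) (Or.inr rfl))
    rw [hset]
    refine MeasurableSet.union ?_ ?_
    · exact MeasurableSet.iUnion fun q => MeasurableSet.iUnion fun _ => hB_meas q
    · exact MeasurableSet.iUnion fun _ => MeasurableSet.univ
  have hφ_lb : ∀ v, -C ≤ φ v := fun v => le_csSup (hφ_bddA v) (Or.inr rfl)
  have hφ_ub : ∀ v, φ v ≤ C := by
    intro v
    refine csSup_le (hφ_ne v) ?_
    rintro x (⟨q, rfl, hq⟩ | rfl)
    · exact le_trans (hA_g _ v (hB_sub q hq)) (hg_ub v)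
    · linarith
  have hφ_int : Integrable φ P := by
    refine (integrable_const C).mono' hφ_meas.stronglyMeasurable.aestronglyMeasurable ?_
    refine Eventually.of_forall fun v => ?_
    rw [Real.norm_eq_abs, abs_le]
    exact ⟨hφ_lb v, hφ_ub v⟩
  have hg_int : Integrable g P := hφ_int.congr hgφ_ae.symm
  have hg_aesm : AEStronglyMeasurable g P := hg_int.aestronglyMeasurable
  -- upper bound : every element of R is at most ∫ g
  have hub : ∀ r ∈ R, r ≤ ∫ v, g v ∂P := by
    rintro r ⟨Q, hQ, ⟨γ, hγ, hfst, hsnd, hγε⟩, rfl⟩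
    haveI := hQ; haveI := hγ
    have hae : ∀ᵐ p ∂γ, dist p.1 p.2 ≤ ε := by
      rw [ae_iff]
      have : {p : S × S | ¬ dist p.1 p.2 ≤ ε} = {p : S × S | dist p.1 p.2 ≤ ε}ᶜ := rfl
      rw [this, measure_compl hdist_closed.measurableSet (measure_ne_top γ _), hγε]
      simp
    have hint1 : Integrable (fun p : S × S => f p.1) γ := by
      refine (integrable_const C).mono'
        ((hf.comp continuous_fst).aestronglyMeasurable) ?_
      exact Eventually.of_forall fun p => by rw [Real.norm_eq_abs]; exact hfC p.1
    have hint2 : Integrable (fun p : S × S => g p.2) γ := by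
      have haesm : AEStronglyMeasurable (fun p : S × S => g p.2) γ := by
        have h1 : AEStronglyMeasurable g (γ.map Prod.snd) := by rw [hsnd]; exact hg_aesm
        exact h1.comp_aemeasurable measurable_snd.aemeasurable
      refine (integrable_const C).mono' haesm ?_
      refine Eventually.of_forall fun p => ?_
      rw [Real.norm_eq_abs, abs_le]
      exact ⟨hg_lb _, hg_ub _⟩
    calc ∫ u, f u ∂Q = ∫ p, f p.1 ∂γ := by
          rw [← hfst, integral_map measurable_fst.aemeasurable hf.aestronglyMeasurable]
      _ ≤ ∫ p, g p.2 ∂γ := by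
          refine integral_mono_ae hint1 hint2 ?_
          exact hae.mono fun p hp => hg_ge p.2 p.1 hp
      _ = ∫ v, g v ∂P := by
          have h1 : AEStronglyMeasurable g (γ.map Prod.snd) := by rw [hsnd]; exact hg_aesm
          rw [← hsnd, integral_map measurable_snd.aemeasurable h1]
  -- the diagonal coupling shows R is nonempty
  have hdiag_meas : Measurable (fun v : S => (v, v)) := measurable_id.prodMk measurable_id
  have hdiag : (∫ u, f u ∂P) ∈ R := by
    refine ⟨P, inferInstance, ⟨P.map (fun v => (v, v)), ?_, ?_, ?_, ?_⟩, rfl⟩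
    · exact Measure.isProbabilityMeasure_map hdiag_meas.aemeasurable
    · rw [Measure.map_map measurable_fst hdiag_meas]
      exact Measure.map_id
    · rw [Measure.map_map measurable_snd hdiag_meas]
      exact Measure.map_id
    · rw [Measure.map_apply hdiag_meas hdist_closed.measurableSet]
      have : (fun v : S => (v, v)) ⁻¹' {p : S × S | dist p.1 p.2 ≤ ε} = univ := by
        refine eq_univ_of_forall fun v => ?_
        simp [hε]
      rw [this]
      exact measure_univ
  have hRne : R.Nonempty := ⟨_, hdiag⟩
  have hRbdd : BddAbove R := by
    refine ⟨C, ?_⟩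
    rintro r ⟨Q, hQ, -, rfl⟩
    haveI := hQ
    have hint : Integrable f Q := by
      refine (integrable_const C).mono' hf.aestronglyMeasurable ?_
      exact Eventually.of_forall fun s => by rw [Real.norm_eq_abs]; exact hfC s
    calc ∫ u, f u ∂Q ≤ ∫ _, C ∂Q := by
          refine integral_mono hint (integrable_const C) fun s => (abs_le.1 (hfC s)).2
      _ = C := by simp
  refine le_antisymm ?_ (csSup_le hRne hub)
  -- lower bound : for every δ > 0, ∫ g ≤ sSup R + δ
  refine le_of_forall_pos_le_add ?_
  intro δ hδ
  -- rational parameters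
  obtain ⟨δ', hδ'0, hδ'δ⟩ := exists_rat_btwn hδ
  have hδ'0R : (0:ℝ) < (δ' : ℝ) := hδ'0
  obtain ⟨qlow, hqlow⟩ := exists_rat_lt (-C)
  obtain ⟨N, hN⟩ := exists_nat_gt ((C - (qlow:ℝ)) / (δ':ℝ))
  set grid : ℕ → ℚ := fun i => qlow + i * δ' with hgrid_def
  have hgrid0 : ((grid 0 : ℚ) : ℝ) < -C := by
    have : grid 0 = qlow := by rw [hgrid_def]; push_cast; ring
    rw [this]; exact hqlow
  have hgridN : C < ((grid N : ℚ) : ℝ) := by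
    have h1 : C - (qlow:ℝ) < N * (δ':ℝ) := by
      rw [div_lt_iff₀ hδ'0R] at hN; exact hN
    rw [hgrid_def]; push_cast; linarith
  have hgrid_succ : ∀ i : ℕ, ((grid (i+1) : ℚ) : ℝ) = ((grid i : ℚ) : ℝ) + (δ' : ℝ) := by
    intro i; rw [hgrid_def]; push_cast; ring
  -- glued selections per level
  set idx : ℚ → S → ℕ := fun q v =>
    if h : ∃ n, v ∈ Prod.snd '' (Kq q n) then Nat.find h + 1 else 0 with hidx_def
  have hLi_meas : ∀ (q : ℚ) (n : ℕ), MeasurableSet (Prod.snd '' (Kq q n)) := fun q n =>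
    (((hKq_cpt q n).image continuous_snd).isClosed).measurableSet
  have hidx_fib : ∀ (q : ℚ) (k : ℕ), MeasurableSet {v | idx q v = k} := by
    intro q k
    rcases k with _ | n
    · have he : {v | idx q v = 0} = (⋃ n, Prod.snd '' (Kq q n))ᶜ := by
        ext v
        constructor
        · intro hv hvU
          have h : ∃ n, v ∈ Prod.snd '' (Kq q n) := mem_iUnion.1 hvU
          have heq : idx q v = Nat.find h + 1 := by rw [hidx_def]; exact dif_pos h
          rw [mem_setOf_eq, heq] at hv
          exact Nat.succ_ne_zero _ hv
        · intro hv
          have h : ¬ ∃ n, v ∈ Prod.snd '' (Kq q n) :=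
            fun ⟨n, hn⟩ => hv (mem_iUnion.2 ⟨n, hn⟩)
          show idx q v = 0
          rw [hidx_def]; exact dif_neg h
      rw [he]
      exact (MeasurableSet.iUnion fun n => hLi_meas q n).compl
    · have he : {v | idx q v = n + 1} =
          Prod.snd '' (Kq q n) ∩ ⋂ (m : ℕ) (_ : m < n), (Prod.snd '' (Kq q m))ᶜ := by
        ext v
        constructor
        · intro hv
          rw [mem_setOf_eq] at hv
          by_cases h : ∃ m, v ∈ Prod.snd '' (Kq q m)
          · have heq : idx q v = Nat.find h + 1 := by rw [hidx_def]; exact dif_pos h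
            rw [heq] at hv
            have hvn : Nat.find h = n := by omega
            have hspec := Nat.find_spec h
            rw [hvn] at hspec
            refine ⟨hspec, ?_⟩
            refine mem_iInter.2 fun m => mem_iInter.2 fun hm => ?_
            intro hvm
            have hlt : m < Nat.find h := by omega
            exact Nat.find_min h hlt hvm
          · have heq : idx q v = 0 := by rw [hidx_def]; exact dif_neg h
            rw [heq] at hv
            exact absurd hv (by omega)
        · rintro ⟨h1, h2⟩
          have h : ∃ m, v ∈ Prod.snd '' (Kq q m) := ⟨n, h1⟩
          show idx q v = n + 1
          have heq : idx q v = Nat.find h + 1 := by rw [hidx_def]; exact dif_pos h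
          rw [heq]
          have hfind : Nat.find h ≤ n := Nat.find_min' h h1
          by_contra hne
          have hlt : Nat.find h < n := by omega
          exact (mem_iInter.1 (mem_iInter.1 h2 (Nat.find h)) hlt) (Nat.find_spec h)
      rw [he]
      exact (hLi_meas q n).inter
        (MeasurableSet.iInter fun m => MeasurableSet.iInter fun _ => (hLi_meas q m).compl)
  have hidx_meas : ∀ q : ℚ, Measurable (idx q) := by
    intro q
    apply measurable_to_countable'
    intro k
    exact hidx_fib q k
  set Ui : ℚ → S → S := fun q v => Nat.casesOn (idx q v) v (fun n => Tqn q n v) with hUi_def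
  have hUi_meas : ∀ q : ℚ, Measurable (Ui q) := by
    intro q
    have hH : Measurable (fun p : S × ℕ => Nat.casesOn p.2 p.1 (fun n => Tqn q n p.1) : S × ℕ → S) := by
      apply measurable_from_prod_countable_left
      intro k
      rcases k with _ | n
      · exact measurable_id
      · exact hTqn_meas q n
    have : Ui q = (fun p : S × ℕ => Nat.casesOn p.2 p.1 (fun n => Tqn q n p.1)) ∘
        (fun v => (v, idx q v)) := rfl
    rw [this]
    exact hH.comp (measurable_id.prodMk (hidx_meas q))
  have hUi_mem : ∀ (q : ℚ) (v : S), v ∈ B q → (Ui q v, v) ∈ Ct (q : ℝ) := by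
    intro q v hv
    have h : ∃ n, v ∈ Prod.snd '' (Kq q n) := mem_iUnion.1 hv
    have : Ui q v = Tqn q (Nat.find h) v := by
      rw [hUi_def]; simp only; rw [hidx_def]; simp only [dif_pos h]
    rw [this]
    exact hKq_sub q (Nat.find h) (hTqn_mem q (Nat.find h) v (Nat.find_spec h))
  have hUi_id : ∀ (q : ℚ) (v : S), v ∉ B q → Ui q v = v := by
    intro q v hv
    have h : ¬ ∃ n, v ∈ Prod.snd '' (Kq q n) := fun ⟨n, hn⟩ => hv (mem_iUnion.2 ⟨n, hn⟩)
    have heq : idx q v = 0 := by rw [hidx_def]; exact dif_neg h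
    rw [hUi_def]; simp only; rw [heq]
    exact rfl
  -- the top-level index
  set κ : S → ℕ := fun v => Nat.findGreatest (fun i => v ∈ B (grid i)) N with hκ_def
  have hκ_fib : ∀ i : ℕ, MeasurableSet {v | κ v = i} := by
    intro i
    by_cases hiN : i ≤ N
    · have : {v | κ v = i} =
          (if i = 0 then univ else B (grid i)) ∩
            ⋂ (j : ℕ) (_ : i < j) (_ : j ≤ N), (B (grid j))ᶜ := by
        ext v
        rw [mem_setOf_eq, hκ_def]
        simp only
        rw [Nat.findGreatest_eq_iff]
        constructor
        · rintro ⟨-, h2, h3⟩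
          refine ⟨?_, mem_iInter.2 fun j => mem_iInter.2 fun hij => mem_iInter.2 fun hjN =>
            h3 hij hjN⟩
          split_ifs with h0
          · exact mem_univ v
          · exact h2 h0
        · rintro ⟨h1, h2⟩
          refine ⟨hiN, fun h0 => ?_, fun j hij hjN => ?_⟩
          · rw [if_neg h0] at h1; exact h1
          · exact mem_iInter.1 (mem_iInter.1 (mem_iInter.1 h2 j) hij) hjN
      rw [this]
      refine MeasurableSet.inter ?_ ?_
      · split_ifs
        · exact MeasurableSet.univ
        · exact hB_meas _
      · exact MeasurableSet.iInter fun j => MeasurableSet.iInter fun _ =>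
          MeasurableSet.iInter fun _ => (hB_meas _).compl
    · have : {v | κ v = i} = ∅ := by
        ext v
        simp only [mem_setOf_eq, mem_empty_iff_false, iff_false]
        intro h
        exact hiN (h ▸ Nat.findGreatest_le N)
      rw [this]; exact MeasurableSet.empty
  have hκ_meas : Measurable κ := by
    apply measurable_to_countable'
    intro k
    exact hκ_fib k
  -- the transport map
  set T : S → S := fun v => Ui (grid (κ v)) v with hT_def
  have hT_meas : Measurable T := by
    have hH : Measurable (fun p : S × ℕ => Ui (grid p.2) p.1) := by
      apply measurable_from_prod_countable_left
      intro k
      exact hUi_meas (grid k)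
    have : T = (fun p : S × ℕ => Ui (grid p.2) p.1) ∘ (fun v => (v, κ v)) := rfl
    rw [this]
    exact hH.comp (measurable_id.prodMk hκ_meas)
  have hTdist : ∀ v, dist (T v) v ≤ ε := by
    intro v
    by_cases hvB : v ∈ B (grid (κ v))
    · exact (hUi_mem _ v hvB).1
    · have : T v = v := hUi_id _ v hvB
      rw [this]; simp [hε]
  have hval : ∀ v, v ∉ Nset → g v ≤ f (T v) + δ := by
    intro v hv
    have hnot : ∀ q : ℚ, v ∈ At (q : ℝ) → v ∈ B q := by
      intro q hq
      by_contra hcon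
      exact hv (mem_iUnion.2 ⟨q, hq, hcon⟩)
    have hv0 : v ∈ B (grid 0) := by
      apply hnot
      rw [hA_univ _ hgrid0.le]
      exact mem_univ v
    have hκB : v ∈ B (grid (κ v)) := by
      rw [hκ_def]
      exact Nat.findGreatest_spec (P := fun i => v ∈ B (grid i)) (Nat.zero_le N) hv0
    have hmem := hUi_mem (grid (κ v)) v hκB
    have hfT : ((grid (κ v) : ℚ) : ℝ) ≤ f (T v) := hmem.2
    have hclaim : g v ≤ ((grid (κ v) : ℚ) : ℝ) + (δ' : ℝ) := by
      by_contra hcon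
      push_neg at hcon
      rw [← hgrid_succ (κ v)] at hcon
      have hvA : v ∈ At ((grid (κ v + 1) : ℚ) : ℝ) := hg_A _ v hcon
      have hvB : v ∈ B (grid (κ v + 1)) := hnot _ hvA
      by_cases hsucc : κ v + 1 ≤ N
      · have : ¬ v ∈ B (grid (κ v + 1)) := by
          rw [hκ_def]
          exact Nat.findGreatest_is_greatest (Nat.lt_succ_self _) hsucc
        exact this hvB
      · have hκN : κ v = N := by
          have h1 : κ v ≤ N := Nat.findGreatest_le N
          omega
        have h2 : g v ≤ C := hg_ub v
        rw [hgrid_succ (κ v), hκN] at hcon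
        have := hgridN
        linarith
    calc g v ≤ ((grid (κ v) : ℚ) : ℝ) + (δ' : ℝ) := hclaim
      _ ≤ f (T v) + (δ' : ℝ) := by linarith
      _ ≤ f (T v) + δ := by linarith [hδ'δ]
  -- the coupling
  have hpairT_meas : Measurable (fun v => (T v, v)) := hT_meas.prodMk measurable_id
  haveI hγp : IsProbabilityMeasure (P.map (fun v => (T v, v))) :=
    Measure.isProbabilityMeasure_map hpairT_meas.aemeasurable
  haveI hQp : IsProbabilityMeasure (P.map T) :=
    Measure.isProbabilityMeasure_map hT_meas.aemeasurable
  have hmemR : (∫ u, f u ∂(P.map T)) ∈ R := by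
    refine ⟨P.map T, inferInstance, ⟨P.map (fun v => (T v, v)), inferInstance, ?_, ?_, ?_⟩, rfl⟩
    · rw [Measure.map_map measurable_fst hpairT_meas]
      rfl
    · rw [Measure.map_map measurable_snd hpairT_meas]
      exact Measure.map_id
    · rw [Measure.map_apply hpairT_meas hdist_closed.measurableSet]
      have : (fun v => (T v, v)) ⁻¹' {p : S × S | dist p.1 p.2 ≤ ε} = univ :=
        eq_univ_of_forall fun v => hTdist v
      rw [this]
      exact measure_univ
  have hfT_int : Integrable (fun v => f (T v)) P := by
    refine (integrable_const C).mono'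
      ((hf.measurable.comp hT_meas).aestronglyMeasurable) ?_
    exact Eventually.of_forall fun v => by rw [Real.norm_eq_abs]; exact hfC (T v)
  have haeN : ∀ᵐ v ∂P, v ∉ Nset := by
    rw [ae_iff]
    simp only [not_not]
    exact hNnull
  have hQint : ∫ u, f u ∂(P.map T) = ∫ v, f (T v) ∂P :=
    integral_map hT_meas.aemeasurable hf.aestronglyMeasurable
  calc ∫ v, g v ∂P ≤ ∫ v, (f (T v) + δ) ∂P := by
        refine integral_mono_ae hg_int (hfT_int.add (integrable_const δ)) ?_
        exact haeN.mono fun v hv => hval v hv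
    _ = (∫ v, f (T v) ∂P) + δ := by
        rw [integral_add hfT_int (integrable_const δ), integral_const]
        simp
    _ = (∫ u, f u ∂(P.map T)) + δ := by rw [hQint]
    _ ≤ sSup R + δ := by
        have := le_csSup hRbdd hmemR
        linarith
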